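/- arXiv:math/0702321 — 3 statements merged into one kernel-verified Lean document; each statement's English description precedes it below -/
import Mathlib

section
/- There exists a unique polynomial P of degree at most d−1 in p with coefficients in O such that for every i with 1 ≤ i ≤ d, ∂_x(p_i) + p_i·∂_y(p_i) = P(p_i), where p_1,...,p_d ∈ O are given with all pairwise differences invertible. Moreover P = −V, where V is the associated polynomial of order 0 of F = ∏(p − p_i). -/
open Polynomial

/-- Coefficientwise application of a derivation `δ` of `O` to a polynomial in `O[X]`. -/
noncomputable def cderiv {O : Type*} [CommRing O] (δ : O → O) (f : O[X]) : O[X] :=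
  f.sum fun n a => C (δ a) * X ^ n

/-- The Sylvester matrix of `f` (degree `n`) and `g` (degree `m`); its determinant
is the resultant of `f` and `g`. -/
noncomputable def sylvester {O : Type*} [CommRing O] (f g : O[X]) (n m : ℕ) :
    Matrix (Fin (m + n)) (Fin (m + n)) O :=
  Matrix.of fun i j =>
    if (i : ℕ) < m then
      (if (i : ℕ) ≤ (j : ℕ) ∧ (j : ℕ) ≤ (i : ℕ) + n then f.coeff (n - ((j : ℕ) - (i : ℕ))) else 0)
    else
      (if (i : ℕ) - m ≤ (j : ℕ) ∧ (j : ℕ) ≤ (i : ℕ) - m + m then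
        g.coeff (m - ((j : ℕ) - ((i : ℕ) - m))) else 0)

/-!
At a node `p i` the polynomial `F = ∏ (X - C (p j))` vanishes and `F'(p i)` is a unit.
Applying a derivation `δ` to `F(p i) = 0` gives `(δ F)(p i) = -F'(p i) δ(p i)`, where `δ F`
is `F` with `δ` applied to its coefficients. Evaluating the defining identity of `U, V` at
`p i` therefore yields `F'(p i) (-V(p i)) = F'(p i) (∂_x p_i + p_i ∂_y p_i)`, so `-V`
interpolates the required values. Uniqueness: the factors `X - C (p j)` are pairwise coprime,
so a polynomial vanishing at every node is divisible by their monic product of degree `d`.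
-/

section CoefficientwiseDerivation

variable {R O : Type*} [CommSemiring R] [CommRing O] [Algebra R O] (δ : Derivation R O O)

lemma cderiv_add (f g : O[X]) : cderiv (δ ·) (f + g) = cderiv (δ ·) f + cderiv (δ ·) g :=
  sum_add_index _ _ _ (fun _ => by simp) fun _ _ _ => by simp [add_mul]

lemma cderiv_monomial (n : ℕ) (a : O) : cderiv (δ ·) (monomial n a) = C (δ a) * X ^ n :=
  sum_monomial_index _ _ (by simp)

lemma Derivation.apply_eval (f : O[X]) (x : O) :
    δ (f.eval x) = (cderiv (δ ·) f).eval x + (derivative f).eval x * δ x := by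
  induction f using Polynomial.induction_on' with
  | add f g hf hg =>
    simp only [eval_add, map_add, cderiv_add, hf, hg]
    ring
  | monomial n a =>
    simp only [cderiv_monomial, eval_monomial, derivative_monomial, eval_mul, eval_C, eval_pow,
      eval_X, Derivation.leibniz, Derivation.leibniz_pow, smul_eq_mul, nsmul_eq_mul]
    ring

lemma eval_cderiv_of_isRoot {f : O[X]} {x : O} (hx : f.IsRoot x) :
    (cderiv (δ ·) f).eval x = -((derivative f).eval x * δ x) := by
  have h := δ.apply_eval f x
  rw [hx.eq_zero, map_zero] at h
  exact eq_neg_of_add_eq_zero_left h.symm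

end CoefficientwiseDerivation

section Nodes

variable {O ι : Type*} [CommRing O] {s : Finset ι} {v : ι → O}

lemma isUnit_eval_derivative_nodal [DecidableEq ι]
    (hv : (s : Set ι).Pairwise fun i j => IsUnit (v i - v j)) {i : ι} (hi : i ∈ s) :
    IsUnit ((derivative (Lagrange.nodal s v)).eval (v i)) := by
  rw [Lagrange.eval_nodal_derivative_eval_node_eq hi, Lagrange.eval_nodal]
  refine Finset.prod_induction _ IsUnit (fun _ _ => IsUnit.mul) isUnit_one fun j hj => ?_
  obtain ⟨hji, hj⟩ := Finset.mem_erase.mp hj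
  exact hv hi hj hji.symm

lemma eq_zero_of_natDegree_lt_card_of_eval_eq_zero_of_isUnit_sub
    (hv : (s : Set ι).Pairwise fun i j => IsUnit (v i - v j)) {f : O[X]}
    (hdeg : f.natDegree < s.card) (heval : ∀ i ∈ s, f.eval (v i) = 0) : f = 0 := by
  nontriviality O
  by_contra hf
  have hdvd : Lagrange.nodal s v ∣ f :=
    Finset.prod_dvd_of_coprime
      (fun i hi j hj hij => isCoprime_X_sub_C_of_isUnit_sub (hv hi hj hij))
      fun i hi => dvd_iff_isRoot.mpr (heval i hi)
  exact Lagrange.nodal_monic.not_dvd_of_natDegree_lt hf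
    (by rwa [Lagrange.natDegree_nodal]) hdvd

end Nodes

lemma neg_eval_eq_of_isRoot {R O : Type*} [CommSemiring R] [CommRing O] [Algebra R O]
    {dx dy : Derivation R O O} {F U V : O[X]}
    (hUV : cderiv (dx ·) F + X * cderiv (dy ·) F = U * F + V * derivative F)
    {x : O} (hx : F.IsRoot x) (hFx : IsUnit ((derivative F).eval x)) :
    (-V).eval x = dx x + x * dy x := by
  have h := congrArg (eval x) hUV
  simp only [eval_add, eval_mul, eval_X, hx.eq_zero, mul_zero, zero_add,
    eval_cderiv_of_isRoot _ hx] at h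
  refine hFx.mul_left_cancel ?_
  rw [eval_neg]
  linear_combination h

theorem statement5_general {O : Type*} [CommRing O] (dx dy : Derivation ℤ O O)
    (d : ℕ) (hd : 3 ≤ d)
    (p : Fin d → O) (hp : ∀ i j, i ≠ j → IsUnit (p i - p j))
    (F : O[X]) (hF : F = ∏ i, (X - C (p i)))
    (U V : O[X]) (hV : V.natDegree ≤ d - 1)
    (hUV : cderiv (dx ·) F + X * cderiv (dy ·) F = U * F + V * derivative F) :
    (∃! P : O[X], P.natDegree ≤ d - 1 ∧
        ∀ i, P.eval (p i) = dx (p i) + p i * dy (p i)) ∧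
    ((-V).natDegree ≤ d - 1 ∧ ∀ i, (-V).eval (p i) = dx (p i) + p i * dy (p i)) := by
  have hF : F = Lagrange.nodal Finset.univ p := hF
  have hnodes : ((Finset.univ : Finset (Fin d)) : Set (Fin d)).Pairwise
      fun i j => IsUnit (p i - p j) := fun i _ j _ => hp i j
  have hinterp (i : Fin d) : (-V).eval (p i) = dx (p i) + p i * dy (p i) := by
    refine neg_eval_eq_of_isRoot hUV ?_ ?_ <;> rw [hF]
    · exact Lagrange.eval_nodal_at_node (Finset.mem_univ i)
    · exact isUnit_eval_derivative_nodal hnodes (Finset.mem_univ i)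
  have hVdeg : (-V).natDegree ≤ d - 1 := by rwa [natDegree_neg]
  refine ⟨⟨-V, ⟨hVdeg, hinterp⟩, fun Q ⟨hQdeg, hQ⟩ => sub_eq_zero.mp ?_⟩,
    hVdeg, hinterp⟩
  refine eq_zero_of_natDegree_lt_card_of_eval_eq_zero_of_isUnit_sub hnodes ?_
    fun i _ => by rw [eval_sub, hQ i, hinterp i, sub_self]
  calc (Q - -V).natDegree ≤ max Q.natDegree (-V).natDegree := natDegree_sub_le _ _
    _ < (Finset.univ : Finset (Fin d)).card := by
      simp only [Finset.card_univ, Fintype.card_fin]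
      omega

/-- Linearization polynomial.  There is a unique polynomial `P` of
degree `≤ d − 1` with `P(p_i) = ∂_x p_i + p_i ∂_y p_i` for all `i`; moreover `P = −V`
where `V` is the associated polynomial of order `0` of `F = ∏ (p − p_i)`. -/
theorem statement5 {O : Type*} [CommRing O] (dx dy : Derivation ℤ O O)
    (d : ℕ) (hd : 3 ≤ d)
    (p : Fin d → O) (hp : ∀ i j, i ≠ j → IsUnit (p i - p j))
    (F : O[X]) (hF : F = ∏ i, (X - C (p i)))
    (U V : O[X]) (hU : U.natDegree ≤ d - 2) (hV : V.natDegree ≤ d - 1)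
    (hUV : cderiv (dx ·) F + X * cderiv (dy ·) F = U * F + V * derivative F) :
    (∃! P : O[X], P.natDegree ≤ d - 1 ∧
        ∀ i, P.eval (p i) = dx (p i) + p i * dy (p i)) ∧
    ((-V).natDegree ≤ d - 1 ∧ ∀ i, (-V).eval (p i) = dx (p i) + p i * dy (p i)) :=
  statement5_general dx dy d hd p hp F hF U V hV hUV
end

section
/- Let F = (p − p_k)·F_k in O[p], where p_k ∈ O. Suppose a 1-form on S_k = {F_k = 0} corresponds to the polynomial r_k ∈ O[p] with differential data t_{ω_k} ∈ O[p] (i.e. d ω_k = t_{ω_k}·(dx∧dy)/∂_p F_k). Then the pullback 1-form on S = {F = 0} corresponding to ω = (p − p_k)·r_k satisfies t_ω = (p − p_k)·t_{ω_k}. In particular, an abelian relation of the extracted web W_k(d−1) (t_{ω_k} = 0) gives an abelian relation of W(d) whose associated polynomial r = (p − p_k)·r_k vanishes at p_k. -/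
/-
The defining relation of `t_ω` is stable under multiplying `F`, `r`, `r_p` and `t` by one and the
same polynomial `L`: by the Leibniz rules the new relation is `L²` times the old one, since the
terms where a derivative falls on `L` appear on both sides as `(r·(∂_x L + p ∂_y L) + r_p ∂_p L)·L·F`.
Taking `L = p − p_k` gives `t_ω = (p − p_k)·t_{ω_k}` with `r_p = (p − p_k)·r_{k,p}`.
-/

open Polynomial

section

variable {O R : Type*} [CommRing O] [CommSemiring R] [Algebra R O]

lemma cderiv_coeff (δ : O → O) (hδ : δ 0 = 0) (f : O[X]) (m : ℕ) :
    (cderiv δ f).coeff m = δ (f.coeff m) := by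
  rw [cderiv, Polynomial.sum_def, finsetSum_coeff]
  simp only [coeff_C_mul, coeff_X_pow, mul_ite, mul_one, mul_zero]
  rw [Finset.sum_ite_eq f.support m (fun n => δ (f.coeff n))]
  split_ifs with h
  · rfl
  · rw [notMem_support_iff.mp h, hδ]

lemma cderiv_mul (δ : Derivation R O O) (f g : O[X]) :
    cderiv (δ ·) (f * g) = cderiv (δ ·) f * g + f * cderiv (δ ·) g := by
  ext m
  simp only [coeff_add, coeff_mul, cderiv_coeff _ δ.map_zero, map_sum, Derivation.leibniz,
    smul_eq_mul, ← Finset.sum_add_distrib]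
  exact Finset.sum_congr rfl fun _ _ => by ring

/-- `t` is the differential data of the 1-form `r·(dy − p dx)/∂_p F` on `{F = 0}`, witnessed
by `rp`; `δx`, `δy` play the roles of `∂_x`, `∂_y` and `X` is the slope variable `p`. -/
def IsDifferentialData (δx δy : Derivation R O O) (F r rp t : O[X]) : Prop :=
  r * (cderiv (δx ·) F + X * cderiv (δy ·) F) + rp * derivative F
    = (cderiv (δx ·) r + X * cderiv (δy ·) r + derivative rp - t) * F

theorem IsDifferentialData.mul_left {δx δy : Derivation R O O} {F r rp t : O[X]}
    (h : IsDifferentialData δx δy F r rp t) (L : O[X]) :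
    IsDifferentialData δx δy (L * F) (L * r) (L * rp) (L * t) := by
  unfold IsDifferentialData at h ⊢
  simp only [cderiv_mul, derivative_mul]
  linear_combination L ^ 2 * h

end

theorem statement11_general {O : Type*} [CommRing O] (dx dy : Derivation ℤ O O)
    (d : ℕ) (hd : 3 ≤ d)
    (pk : O) (Fk F : O[X]) (hF : F = (X - C pk) * Fk)
    (rk rkp t : O[X]) (hrkp : rkp.natDegree ≤ d - 2)
    (hrel : rk * (cderiv (dx ·) Fk + X * cderiv (dy ·) Fk) + rkp * derivative Fk
      = (cderiv (dx ·) rk + X * cderiv (dy ·) rk + derivative rkp - t) * Fk) :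
    (∃ rp : O[X], rp.natDegree ≤ d - 1 ∧
      ((X - C pk) * rk) * (cderiv (dx ·) F + X * cderiv (dy ·) F) + rp * derivative F
        = (cderiv (dx ·) ((X - C pk) * rk) + X * cderiv (dy ·) ((X - C pk) * rk)
            + derivative rp - (X - C pk) * t) * F) ∧
    (t = 0 → ((X - C pk) * rk).eval pk = 0) := by
  refine ⟨⟨(X - C pk) * rkp, ?_, ?_⟩, fun _ => by simp⟩
  · have := natDegree_X_sub_C_le pk
    exact natDegree_mul_le.trans (by omega)
  · subst hF
    exact IsDifferentialData.mul_left (δx := dx) (δy := dy) hrel (X - C pk)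

/-- Extracted webs and pullback of 1-forms.
Let `F = (p − p_k)·F_k`.  If the 1-form on `S_k = {F_k = 0}` given by `r_k` has
differential data `t_{ω_k}` — i.e. there is `r_{k,p}` with
`r_k(∂_x F_k + p ∂_y F_k) + r_{k,p} ∂_p F_k = (∂_x r_k + p ∂_y r_k + ∂_p r_{k,p} − t_{ω_k})·F_k` —
then the corresponding 1-form on `S = {F = 0}`, given by `r = (p − p_k)·r_k`, has
differential data `t_ω = (p − p_k)·t_{ω_k}`.  In particular an abelian relation of the
extracted web (`t_{ω_k} = 0`) gives one of `W(d)` whose polynomial vanishes at `p_k`. -/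
theorem statement11 {O : Type*} [CommRing O] (dx dy : Derivation ℤ O O)
    (d : ℕ) (hd : 3 ≤ d)
    (pk : O) (Fk F : O[X]) (hF : F = (X - C pk) * Fk)
    (hdegk : Fk.natDegree = d - 1) (hdeg : F.natDegree = d)
    (rk rkp t : O[X]) (hrk : rk.natDegree ≤ d - 4) (hrkp : rkp.natDegree ≤ d - 2)
    (ht : t.natDegree ≤ d - 2)
    (hrel : rk * (cderiv (dx ·) Fk + X * cderiv (dy ·) Fk) + rkp * derivative Fk
      = (cderiv (dx ·) rk + X * cderiv (dy ·) rk + derivative rkp - t) * Fk) :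
    (∃ rp : O[X], rp.natDegree ≤ d - 1 ∧
      ((X - C pk) * rk) * (cderiv (dx ·) F + X * cderiv (dy ·) F) + rp * derivative F
        = (cderiv (dx ·) ((X - C pk) * rk) + X * cderiv (dy ·) ((X - C pk) * rk)
            + derivative rp - (X - C pk) * t) * F) ∧
    (t = 0 → ((X - C pk) * rk).eval pk = 0) :=
  statement11_general dx dy d hd pk Fk F hF rk rkp t hrkp hrel
end

section
/- A linear d-web is algebraic if and only if the system ∂_y φ = ∂_y(a_0)/a_0, ∂_x φ = ∂_x(a_0)/a_0 + ∂_y(a_1/a_0) admits a solution φ ∈ O, which holds if and only if ∂_y²(a_1/a_0) = 0; equivalently, a linear web is algebraic iff its fundamental form α is closed (dα = 0). -/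
open Polynomial

lemma coeff_cderiv {O : Type*} [CommRing O] (δ : Derivation ℤ O O) (f : O[X]) (k : ℕ) :
    (cderiv (δ ·) f).coeff k = δ (f.coeff k) := by
  rw [cderiv, Polynomial.sum, finset_sum_coeff]
  simp only [coeff_C_mul, coeff_X_pow, mul_ite, mul_one, mul_zero]
  rw [Finset.sum_ite_eq f.support k (fun n => δ (f.coeff n))]
  by_cases h : k ∈ f.support
  · simp [h]
  · simp [h, Polynomial.notMem_support_iff.mp h]


/-- Algebraic linear webs.  A linear `d`-web (presented by
`F = a_0 p^d + ⋯ + a_d` with all `V_i = 0`, here recorded by `∂_x F + p ∂_y F = U·F`)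
is algebraic — i.e. `U = ∂_y(φ)·p + ∂_x(φ)` for some `φ` — iff the system
`∂_y φ = ∂_y(a_0)/a_0`, `∂_x φ = ∂_x(a_0)/a_0 + ∂_y(a_1/a_0)` has a solution `φ ∈ O`,
which (by the Poincaré lemma) holds iff `∂_y²(a_1/a_0) = 0`, i.e. iff the fundamental
form `α` is closed. -/
theorem statement14 {O : Type*} [CommRing O] (dx dy : Derivation ℤ O O)
    (hcomm : ∀ a : O, dx (dy a) = dy (dx a))
    (poincare : ∀ A B : O, dy A = dx B → ∃ φ : O, dx φ = A ∧ dy φ = B)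
    (d : ℕ) (hd : 3 ≤ d) (F : O[X]) (hdeg : F.natDegree = d)
    (a0' : O) (ha0 : F.leadingCoeff * a0' = 1)
    (hres : IsUnit (_root_.sylvester F (derivative F) d (d - 1)).det)
    (U : O[X]) (hU : U.natDegree ≤ d - 2)
    (hlin : cderiv (dx ·) F + X * cderiv (dy ·) F = U * F) :
    ((∃ φ : O, U = C (dy φ) * X + C (dx φ)) ↔
      (∃ φ : O, dy φ = dy F.leadingCoeff * a0' ∧
        dx φ = dx F.leadingCoeff * a0' + dy (F.coeff (d - 1) * a0'))) ∧
    ((∃ φ : O, dy φ = dy F.leadingCoeff * a0' ∧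
        dx φ = dx F.leadingCoeff * a0' + dy (F.coeff (d - 1) * a0')) ↔
      dy (dy (F.coeff (d - 1) * a0')) = 0) := by
  have hlc : F.leadingCoeff = F.coeff d := by rw [← hdeg]; rfl
  rw [hlc]
  have h1' : F.coeff d * a0' = 1 := by rw [← hlc]; exact ha0
  have hFz : ∀ j, d < j → F.coeff j = 0 := fun j hj =>
    coeff_eq_zero_of_natDegree_lt (hdeg ▸ hj)
  have hco : ∀ n : ℕ, dx (F.coeff (n+1)) + dy (F.coeff n) = (U * F).coeff (n+1) := by
    intro n
    have h := congrArg (fun p : O[X] => p.coeff (n+1)) hlin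
    simpa only [coeff_add, coeff_X_mul, coeff_cderiv] using h
  -- high coefficients of U vanish
  have hUz' : ∀ n k, 2 ≤ k → d - 1 ≤ k + n → U.coeff k = 0 := by
    intro n
    induction n with
    | zero =>
      intro k hk2 hkd
      exact coeff_eq_zero_of_natDegree_lt (lt_of_le_of_lt hU (by omega))
    | succ n ih =>
      intro k hk2 hkd
      by_cases hcase : d - 1 ≤ k + n
      · exact ih k hk2 hcase
      · have hkn : k + n = d - 2 := by omega
        have hmain := hco (k + d - 1)
        have e1 : k + d - 1 + 1 = k + d := by omega
        rw [e1] at hmain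
        rw [hFz (k+d) (by omega), hFz (k+d-1) (by omega)] at hmain
        simp only [map_zero, add_zero, coeff_mul] at hmain
        have hsum : (∑ x ∈ Finset.HasAntidiagonal.antidiagonal (k + d), U.coeff x.1 * F.coeff x.2)
            = U.coeff k * F.coeff d := by
          apply Finset.sum_eq_single_of_mem (k, d) (by simp)
          rintro ⟨b1, b2⟩ hb hne
          simp only [Finset.HasAntidiagonal.mem_antidiagonal] at hb
          simp only [ne_eq, Prod.mk.injEq, not_and] at hne
          dsimp only
          rcases lt_trichotomy b1 k with h | h | h
          · rw [hFz b2 (by omega), mul_zero]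
          · exact absurd (by omega) (hne h)
          · rw [ih b1 (by omega) (by omega), zero_mul]
        rw [hsum] at hmain
        calc U.coeff k = U.coeff k * F.coeff d * a0' := by rw [mul_assoc, h1', mul_one]
          _ = 0 := by rw [← hmain, zero_mul]
  have hUz : ∀ k, 2 ≤ k → U.coeff k = 0 := fun k hk => hUz' d k hk (by omega)
  have hUeq : U = C (U.coeff 1) * X + C (U.coeff 0) :=
    eq_X_add_C_of_natDegree_le_one (natDegree_le_iff_coeff_eq_zero.mpr
      (fun N hN => hUz N (by omega)))
  have hUFco : ∀ n, (U * F).coeff (n+1) = U.coeff 1 * F.coeff n + U.coeff 0 * F.coeff (n+1) := by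
    intro n
    conv_lhs => rw [hUeq]
    rw [add_mul, coeff_add, mul_assoc, coeff_C_mul, coeff_X_mul, coeff_C_mul]
  have E1 : dy (F.coeff d) = U.coeff 1 * F.coeff d := by
    have h := hco d
    rw [hUFco d, hFz (d+1) (by omega)] at h
    simpa using h
  have E2 : dx (F.coeff d) + dy (F.coeff (d-1))
      = U.coeff 1 * F.coeff (d-1) + U.coeff 0 * F.coeff d := by
    have e : d - 1 + 1 = d := by omega
    have h := hco (d-1)
    rw [hUFco (d-1), e] at h
    exact h
  -- derivative of a0'
  have Lya := dy.leibniz (F.coeff d) a0'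
  rw [h1', Derivation.map_one_eq_zero] at Lya
  simp only [smul_eq_mul] at Lya
  have Lxa := dx.leibniz (F.coeff d) a0'
  rw [h1', Derivation.map_one_eq_zero] at Lxa
  simp only [smul_eq_mul] at Lxa
  have hda0y : dy a0' = -(dy (F.coeff d) * a0' * a0') := by
    linear_combination (-(dy a0')) * h1' - a0' * Lya
  have hda0x : dx a0' = -(dx (F.coeff d) * a0' * a0') := by
    linear_combination (-(dx a0')) * h1' - a0' * Lxa
  have Lyc : dy (F.coeff (d-1) * a0')
      = F.coeff (d-1) * dy a0' + a0' * dy (F.coeff (d-1)) := by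
    rw [Derivation.leibniz, smul_eq_mul, smul_eq_mul]
  have hu1v : U.coeff 1 = dy (F.coeff d) * a0' := by
    linear_combination (-a0') * E1 - U.coeff 1 * h1'
  have hu0v : U.coeff 0 = dx (F.coeff d) * a0' + dy (F.coeff (d-1) * a0') := by
    rw [Lyc, hda0y]
    linear_combination (-a0') * E2 - U.coeff 0 * h1' - (F.coeff (d-1) * a0') * hu1v
  have hcross : dy (dx (F.coeff d) * a0') = dx (dy (F.coeff d) * a0') := by
    rw [Derivation.leibniz, Derivation.leibniz]
    simp only [smul_eq_mul]
    rw [hda0y, hda0x, hcomm]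
    ring
  constructor
  · constructor
    · rintro ⟨φ, hφ⟩
      have hc1 : U.coeff 1 = dy φ := by rw [hφ]; simp
      have hc0 : U.coeff 0 = dx φ := by rw [hφ]; simp
      exact ⟨φ, by rw [← hc1, hu1v], by rw [← hc0, hu0v]⟩
    · rintro ⟨φ, hy, hx⟩
      refine ⟨φ, ?_⟩
      rw [hUeq, hy, hx, hu1v, hu0v]
  · constructor
    · rintro ⟨φ, hy, hx⟩
      have h := hcomm φ
      rw [hy, hx, map_add] at h
      linear_combination (-1 : O) * h - hcross
    · intro h
      have hint : dy (dx (F.coeff d) * a0' + dy (F.coeff (d-1) * a0'))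
          = dx (dy (F.coeff d) * a0') := by
        rw [map_add, h, add_zero, hcross]
      obtain ⟨φ, hx, hy⟩ := poincare _ _ hint
      exact ⟨φ, hy, hx⟩
end
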